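/- Let A be a d×d real matrix such that every eigenvalue of A is either zero (with equal algebraic and geometric multiplicity) or has strictly positive real part. Then exp(-tA) converges as t → ∞ to the projection P onto ker A along the sum of the generalized eigenspaces for the nonzero eigenvalues. -/

import Mathlib

open Matrix NormedSpace

attribute [local instance] Matrix.linftyOpNormedRing Matrix.linftyOpNormedAlgebra

/-!
Since `P` is an idempotent with `AP = PA = 0`, we have
`exp(-tA) = P + exp(-t(A + P)) (1 - P)`. On `ker P` the matrix `A + P` acts as `A`, and on
`range P ⊆ ker A` as the identity, so every eigenvalue of `A + P` is either `1` or a nonzero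
eigenvalue of `A`; in both cases its real part is positive. Writing `exp(-tN)` on a generalized
eigenvector of `N` for `μ` as `e^{-tμ}` times a polynomial in `t` shows that `exp(-tN) → 0`
whenever the spectrum of `N` lies in the open right half-plane, hence `exp(-tA) → P`.
-/

open Filter Finset Topology
open scoped Nat

theorem ContinuousLinearMap.map_exp_eq_sum_of_map_pow_eq_zero {𝕂 𝔸 E : Type*}
    [NontriviallyNormedField 𝕂] [CharZero 𝕂] [ContinuousSMul ℚ 𝕂] [NormedRing 𝔸]
    [NormedAlgebra 𝕂 𝔸] [CompleteSpace 𝔸] [AddCommGroup E] [Module 𝕂 E] [TopologicalSpace E]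
    [T2Space E] (L : 𝔸 →L[𝕂] E) {a : 𝔸} {k : ℕ} (h : ∀ j, k ≤ j → L (a ^ j) = 0) :
    L (exp a) = ∑ j ∈ range k, (j !⁻¹ : 𝕂) • L (a ^ j) := by
  have hsum := (exp_series_hasSum_exp' (𝕂 := 𝕂) a).mapL L
  simp only [map_smul] at hsum
  exact hsum.unique <| hasSum_sum_of_ne_finset_zero fun j hj => by
    rw [h j (by simpa using hj), smul_zero]

namespace NormedSpace

variable {𝔸 : Type*} [NormedRing 𝔸] [NormedAlgebra ℚ 𝔸] [CompleteSpace 𝔸]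

theorem exp_mul_of_mul_eq_zero {a b : 𝔸} (h : a * b = 0) : exp a * b = b := by
  have := ((ContinuousLinearMap.mul ℚ 𝔸).flip b).map_exp_eq_sum_of_map_pow_eq_zero
    (a := a) (k := 1) fun j hj => by
      obtain ⟨i, rfl⟩ := Nat.exists_eq_add_of_le' hj
      simp [pow_succ, mul_assoc, h]
  simpa using this

theorem exp_eq_add_exp_add_mul_one_sub {a b p : 𝔸} (hap : a * p = 0)
    (hbp : b * (1 - p) = 0) (hab : Commute a b) : exp a = p + exp (a + b) * (1 - p) :=
  calc exp a = exp a * p + exp a * (1 - p) := by rw [← mul_add, add_sub_cancel, mul_one]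
    _ = p + exp (a + b) * (1 - p) := by
      rw [exp_mul_of_mul_eq_zero hap, exp_add_of_commute hab, mul_assoc,
        exp_mul_of_mul_eq_zero hbp]

end NormedSpace

theorem Complex.tendsto_pow_mul_exp_neg_mul_atTop (j : ℕ) {μ : ℂ} (hμ : 0 < μ.re) :
    Tendsto (fun t : ℝ => (t : ℂ) ^ j * Complex.exp (-(t * μ))) atTop (𝓝 0) := by
  rw [tendsto_zero_iff_norm_tendsto_zero]
  refine (tendsto_rpow_mul_exp_neg_mul_atTop_nhds_zero j μ.re hμ).congr' ?_
  filter_upwards [eventually_ge_atTop 0] with t ht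
  simp [Complex.norm_exp, abs_of_nonneg ht, mul_comm]

namespace Matrix

section Complexification

variable {m n : Type*} [Fintype n]

theorem re_map_ofReal_mulVec (M : Matrix m n ℝ) (v : n → ℂ) (i : m) :
    ((M.map Complex.ofReal *ᵥ v) i).re = (M *ᵥ fun j => (v j).re) i := by
  simp [mulVec, dotProduct, Complex.re_sum]

theorem im_map_ofReal_mulVec (M : Matrix m n ℝ) (v : n → ℂ) (i : m) :
    ((M.map Complex.ofReal *ᵥ v) i).im = (M *ᵥ fun j => (v j).im) i := by
  simp [mulVec, dotProduct, Complex.im_sum]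

theorem map_ofReal_mulVec_eq_self {A P : Matrix n n ℝ} (hker : ∀ x, A *ᵥ x = 0 → P *ᵥ x = x)
    {v : n → ℂ} (hv : A.map Complex.ofReal *ᵥ v = 0) : P.map Complex.ofReal *ᵥ v = v := by
  have hre : A *ᵥ (fun j => (v j).re) = 0 := funext fun i => by
    rw [← re_map_ofReal_mulVec, hv]; rfl
  have him : A *ᵥ (fun j => (v j).im) = 0 := funext fun i => by
    rw [← im_map_ofReal_mulVec, hv]; rfl
  funext i
  apply Complex.ext
  · rw [re_map_ofReal_mulVec, hker _ hre]
  · rw [im_map_ofReal_mulVec, hker _ him]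

end Complexification

variable {n : Type*} [Fintype n] [DecidableEq n]

theorem mem_spectrum_iff_exists_mulVec_eq_smul {K : Type*} [Field K] {M : Matrix n n K} {μ : K} :
    μ ∈ spectrum K M ↔ ∃ v ≠ 0, M *ᵥ v = μ • v := by
  rw [← spectrum_toLin', ← Module.End.hasEigenvalue_iff_mem_spectrum]
  constructor
  · intro h
    obtain ⟨v, hv⟩ := h.exists_hasEigenvector
    exact ⟨v, hv.2, by simpa using hv.apply_eq_smul⟩
  · rintro ⟨v, hv, h⟩
    exact Module.End.hasEigenvalue_of_hasEigenvector
      ⟨Module.End.mem_eigenspace_iff.2 (by simpa using h), hv⟩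

theorem spectrum_add_subset_insert_one {K : Type*} [Field K] {A P : Matrix n n K}
    (hPP : P * P = P) (hPA : P * A = 0) (hker : ∀ v, A *ᵥ v = 0 → P *ᵥ v = v) :
    spectrum K (A + P) ⊆ insert 1 (spectrum K A \ {0}) := by
  intro μ hμ
  obtain ⟨v, hv, hAPv⟩ := mem_spectrum_iff_exists_mulVec_eq_smul.1 hμ
  rcases eq_or_ne μ 1 with rfl | hμ1
  · exact Set.mem_insert _ _
  have hPv : P *ᵥ v = 0 := by
    have h : μ • (P *ᵥ v) = P *ᵥ v := by
      rw [← mulVec_smul, ← hAPv, mulVec_mulVec, mul_add, hPA, hPP, zero_add]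
    have h' : (μ - 1) • (P *ᵥ v) = 0 := by rw [sub_smul, h, one_smul, sub_self]
    exact (smul_eq_zero.1 h').resolve_left (sub_ne_zero.2 hμ1)
  have hAv : A *ᵥ v = μ • v := by rwa [add_mulVec, hPv, add_zero] at hAPv
  refine Set.mem_insert_of_mem _ ⟨mem_spectrum_iff_exists_mulVec_eq_smul.2 ⟨v, hv, hAv⟩, ?_⟩
  rintro rfl
  exact hv (by rw [← hker v (by rw [hAv, zero_smul]), hPv])

theorem re_pos_of_mem_spectrum_map_ofReal_add {A P : Matrix n n ℝ}
    (hspec : ∀ μ ∈ spectrum ℂ (A.map Complex.ofReal), μ = 0 ∨ 0 < μ.re)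
    (hPP : P * P = P) (hPA : P * A = 0) (hker : ∀ x, A *ᵥ x = 0 → P *ᵥ x = x) :
    ∀ μ ∈ spectrum ℂ ((A + P).map Complex.ofReal), 0 < μ.re := by
  let C : Matrix n n ℝ →+* Matrix n n ℂ := Complex.ofRealHom.mapMatrix
  intro μ hμ
  rcases spectrum_add_subset_insert_one (A := C A) (P := C P) (by rw [← map_mul, hPP])
      (by rw [← map_mul, hPA, map_zero]) (fun _ => map_ofReal_mulVec_eq_self hker)
      (by rw [← map_add]; exact hμ) with rfl | ⟨hμA, hμ0⟩
  · norm_num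
  · exact (hspec μ hμA).resolve_left hμ0

theorem exp_mulVec_eq_sum_of_pow_mulVec_eq_zero {M : Matrix n n ℂ} {w : n → ℂ} {k : ℕ}
    (hw : M ^ k *ᵥ w = 0) : exp M *ᵥ w = ∑ j ∈ range k, (j !⁻¹ : ℂ) • (M ^ j *ᵥ w) :=
  (LinearMap.toContinuousLinearMap ((mulVecBilin ℂ ℂ).flip w)).map_exp_eq_sum_of_map_pow_eq_zero
    (a := M) fun j hj => by
      obtain ⟨i, rfl⟩ := Nat.exists_eq_add_of_le' hj
      show M ^ (i + k) *ᵥ w = 0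
      rw [pow_add, ← mulVec_mulVec, hw, mulVec_zero]

theorem exp_neg_smul_mulVec_eq_sum_of_pow_mulVec_eq_zero {N : Matrix n n ℂ} {μ : ℂ} {k : ℕ}
    {w : n → ℂ} (hw : (N - μ • 1) ^ k *ᵥ w = 0) (t : ℝ) :
    exp (-(t • N)) *ᵥ w = ∑ j ∈ range k,
      ((-1) ^ j * (j !⁻¹ : ℂ) * ((t : ℂ) ^ j * Complex.exp (-(t * μ)))) • ((N - μ • 1) ^ j *ᵥ w) := by
  have hsplit : -(t • N) = algebraMap ℂ _ (-(t * μ)) + (-(t : ℂ)) • (N - μ • 1) := by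
    rw [Algebra.algebraMap_eq_smul_one, RCLike.real_smul_eq_coe_smul (K := ℂ) t N]
    module
  have hcomm : Commute (algebraMap ℂ (Matrix n n ℂ) (-(t * μ))) ((-(t : ℂ)) • (N - μ • 1)) :=
    Algebra.commutes _ _
  have hscalar : exp (algebraMap ℂ (Matrix n n ℂ) (-(t * μ))) =
      algebraMap ℂ _ (Complex.exp (-(t * μ))) := by
    rw [Complex.exp_eq_exp_ℂ]
    exact (map_exp _ (continuous_algebraMap ℂ _) _).symm
  have hnil : ((-(t : ℂ)) • (N - μ • 1)) ^ k *ᵥ w = 0 := by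
    rw [smul_pow, smul_mulVec, hw, smul_zero]
  rw [hsplit, exp_add_of_commute _ _ hcomm, hscalar, Algebra.algebraMap_eq_smul_one,
    smul_mul_assoc, one_mul, smul_mulVec, exp_mulVec_eq_sum_of_pow_mulVec_eq_zero hnil, smul_sum]
  refine sum_congr rfl fun j _ => ?_
  rw [smul_pow, smul_mulVec, smul_smul, smul_smul, neg_pow]
  ring_nf

theorem tendsto_exp_neg_smul_mulVec_of_pow_mulVec_eq_zero {N : Matrix n n ℂ} {μ : ℂ}
    (hμ : 0 < μ.re) {k : ℕ} {w : n → ℂ} (hw : (N - μ • 1) ^ k *ᵥ w = 0) :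
    Tendsto (fun t : ℝ => exp (-(t • N)) *ᵥ w) atTop (𝓝 0) := by
  simp only [exp_neg_smul_mulVec_eq_sum_of_pow_mulVec_eq_zero hw]
  rw [← sum_const_zero (s := range k)]
  refine tendsto_finsetSum _ fun j _ => ?_
  rw [← zero_smul ℂ ((N - μ • 1) ^ j *ᵥ w), ← mul_zero ((-1) ^ j * (j !⁻¹ : ℂ))]
  exact ((Complex.tendsto_pow_mul_exp_neg_mul_atTop j hμ).const_mul _).smul_const _

theorem tendsto_exp_neg_smul_mulVec_atTop {N : Matrix n n ℂ}
    (hN : ∀ μ ∈ spectrum ℂ N, 0 < μ.re) (w : n → ℂ) :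
    Tendsto (fun t : ℝ => exp (-(t • N)) *ᵥ w) atTop (𝓝 0) := by
  set f : Module.End ℂ (n → ℂ) := toLinAlgEquiv' N
  have hw : w ∈ ⨆ μ, f.maxGenEigenspace μ := by
    rw [Module.End.iSup_maxGenEigenspace_eq_top]
    trivial
  refine Submodule.iSup_induction _ (motive := fun v => Tendsto (fun t : ℝ => exp (-(t • N)) *ᵥ v)
    atTop (𝓝 0)) hw (fun μ x hx => ?_) (by simp)
    fun x y hx hy => by simpa [mulVec_add] using hx.add hy
  obtain ⟨k, hk⟩ := (Module.End.mem_maxGenEigenspace _ _ _).1 hx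
  rcases eq_or_ne x 0 with rfl | hx0
  · simp
  have hμ : μ ∈ spectrum ℂ N := by
    rw [← AlgEquiv.spectrum_eq toLinAlgEquiv' N]
    refine Module.End.HasEigenvalue.mem_spectrum
      (Module.End.hasEigenvalue_of_hasGenEigenvalue (k := k) ?_)
    exact (Submodule.ne_bot_iff _).2 ⟨x, Module.End.mem_genEigenspace_nat.2 hk, hx0⟩
  refine tendsto_exp_neg_smul_mulVec_of_pow_mulVec_eq_zero (hN μ hμ) (k := k) ?_
  rwa [show f - μ • 1 = toLinAlgEquiv' (N - μ • 1) by simp [f], ← map_pow,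
    toLinAlgEquiv'_apply] at hk

theorem tendsto_exp_neg_smul_atTop {N : Matrix n n ℂ} (hN : ∀ μ ∈ spectrum ℂ N, 0 < μ.re) :
    Tendsto (fun t : ℝ => exp (-(t • N))) atTop (𝓝 0) := by
  refine tendsto_pi_nhds.2 fun i => tendsto_pi_nhds.2 fun j => ?_
  simpa [mulVec_single_one] using
    tendsto_pi_nhds.1 (tendsto_exp_neg_smul_mulVec_atTop hN (Pi.single j 1)) i

theorem tendsto_exp_neg_smul_atTop_of_map_ofReal {B : Matrix n n ℝ}
    (hB : ∀ μ ∈ spectrum ℂ (B.map Complex.ofReal), 0 < μ.re) :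
    Tendsto (fun t : ℝ => exp (-(t • B))) atTop (𝓝 0) := by
  have h_re (t : ℝ) : exp (-(t • B)) = (exp (-(t • B.map Complex.ofReal))).map Complex.re := by
    have hφ := map_exp (Complex.ofRealHom.mapMatrix : Matrix n n ℝ →+* Matrix n n ℂ)
      (continuous_id.matrix_map Complex.continuous_ofReal) (-(t • B))
    have hsmul : Complex.ofRealHom.mapMatrix (-(t • B)) = -(t • B.map Complex.ofReal) := by
      ext
      simp [Complex.real_smul]
    rw [hsmul] at hφ
    refine Eq.trans ?_ (congrArg (Matrix.map · Complex.re) hφ)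
    ext
    -- `map_exp` uses the topology of the `linftyOp` norm, the goal the product topology;
    -- the two agree definitionally but not syntactically.
    simp
    rfl
  have hre : Continuous fun M : Matrix n n ℂ => M.map Complex.re :=
    continuous_id.matrix_map Complex.continuous_re
  have h := (hre.tendsto 0).comp (tendsto_exp_neg_smul_atTop hB)
  rw [Matrix.map_zero _ Complex.zero_re] at h
  exact h.congr fun t => (h_re t).symm

end Matrix

/-- The sum of the generalized eigenspaces of the nonzero eigenvalues is `range A`, so the
projection `P` is encoded by `P² = P`, `AP = 0`, `PA = 0` and `P = id` on `ker A`. -/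
theorem almost_pos_stable_exp_tendsto_proj_general {d : ℕ} (A P : Matrix (Fin d) (Fin d) ℝ)
    (hspec : ∀ μ ∈ spectrum ℂ (A.map Complex.ofReal), μ = 0 ∨ 0 < μ.re)
    (hP1 : P * P = P) (hP2 : A * P = 0) (hP3 : P * A = 0)
    (hP4 : ∀ x : Fin d → ℝ, A *ᵥ x = 0 → P *ᵥ x = x) :
    Filter.Tendsto (fun t : ℝ => exp (-(t • A))) Filter.atTop (nhds P) := by
  have h_decomp (t : ℝ) : exp (-(t • A)) = P + exp (-(t • (A + P))) * (1 - P) := by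
    rw [smul_add, neg_add]
    refine exp_eq_add_exp_add_mul_one_sub (by simp [hP2]) (by simp [mul_sub, hP1]) ?_
    have hAP : Commute A P := hP2.trans hP3.symm
    exact ((hAP.smul_left t).smul_right t).neg_left.neg_right
  have h_decay : Tendsto (fun t : ℝ => exp (-(t • (A + P)))) atTop (𝓝 0) :=
    tendsto_exp_neg_smul_atTop_of_map_ofReal
      (re_pos_of_mem_spectrum_map_ofReal_add hspec hP1 hP3 hP4)
  simpa [h_decomp] using tendsto_const_nhds.add (h_decay.mul_const (1 - P))

/-- If every eigenvalue of `A` is zero (with equal algebraic and geometric multiplicity,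
i.e. `ker A² = ker A`) or has positive real part, then `exp(-tA)` converges as `t → ∞`
to the projection `P` onto `ker A` along the sum of the generalized eigenspaces of the
nonzero eigenvalues (that sum equals `range A` under the hypotheses, so `P` is
characterized by `P² = P`, `AP = 0`, `PA = 0` and `P = id` on `ker A`). -/
theorem almost_pos_stable_exp_tendsto_proj {d : ℕ} (A P : Matrix (Fin d) (Fin d) ℝ)
    (hspec : ∀ μ ∈ spectrum ℂ (A.map Complex.ofReal), μ = 0 ∨ 0 < μ.re)
    (hkerstab : ∀ x : Fin d → ℝ, A *ᵥ (A *ᵥ x) = 0 → A *ᵥ x = 0)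
    (hP1 : P * P = P) (hP2 : A * P = 0) (hP3 : P * A = 0)
    (hP4 : ∀ x : Fin d → ℝ, A *ᵥ x = 0 → P *ᵥ x = x) :
    Filter.Tendsto (fun t : ℝ => exp (-(t • A))) Filter.atTop (nhds P) :=
  almost_pos_stable_exp_tendsto_proj_general A P hspec hP1 hP2 hP3 hP4
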